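/- arXiv:2401.09350 — 6 statements merged into one kernel-verified Lean document; each statement's English description precedes it below -/
import Mathlib

section
/- Let X_1, ..., X_m be i.i.d. random vectors in R^d whose coordinates are i.i.d. samples from a zero-mean distribution with finite positive variance. Then for any fixed index j, the probability that X_j maximizes the inner product with itself over the collection, i.e. P[⟨X_j, X_j⟩ ≥ ⟨X_j, X_i⟩ for all i], tends to 1 as d → ∞. -/
/-!
The diagonal inner product `⟨X_j, X_j⟩ = ∑ₖ ξ_{jk}²` grows linearly in `d`, while for `i ≠ j`
the cross product `⟨X_j, X_i⟩` is a sum of `d` pairwise independent centred terms of variance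
`v²`, hence of order `√d`. Chebyshev's inequality makes both statements quantitative. Since `ξ²`
need not have a finite variance, the diagonal is bounded below by the sum of the truncations
`min (ξ², c)`, with `c` chosen so that `𝔼[min (ξ², c)] > v / 2`; both ways of failing then have
probability `O(1/d)`.
-/

open MeasureTheory ProbabilityTheory Filter

section

variable {Ω : Type*} [MeasurableSpace Ω] {P : Measure Ω}

namespace MeasureTheory

theorem tendsto_integral_min_natCast {f : Ω → ℝ} (hf : Integrable f P) :
    Tendsto (fun n : ℕ => ∫ ω, min (f ω) n ∂P) atTop (nhds (∫ ω, f ω ∂P)) := by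
  refine integral_tendsto_of_tendsto_of_monotone (fun n => ?_) hf
    (ae_of_all _ fun ω n₁ n₂ h => min_le_min le_rfl (Nat.cast_le.2 h))
    (ae_of_all _ fun ω => tendsto_const_nhds.congr' ?_)
  · refine hf.mono (hf.aestronglyMeasurable.inf aestronglyMeasurable_const)
      (ae_of_all _ fun ω => ?_)
    rcases le_total (f ω) n with h | h
    · rw [min_eq_left h]
    · rw [min_eq_right h, Real.norm_eq_abs, Real.norm_eq_abs, Nat.abs_cast]
      exact h.trans (le_abs_self _)
  · filter_upwards [tendsto_natCast_atTop_atTop.eventually_ge_atTop (f ω)] with n hn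
    exact (min_eq_left hn).symm

end MeasureTheory

namespace ProbabilityTheory

theorem IndepFun.memLp_two_mul {X Y : Ω → ℝ} (hXY : IndepFun X Y P) (hX : MemLp X 2 P)
    (hY : MemLp Y 2 P) : MemLp (X * Y) 2 P := by
  refine (memLp_two_iff_integrable_sq (hX.aestronglyMeasurable.mul hY.aestronglyMeasurable)).2 ?_
  have hsq := (hXY.comp (measurable_id.pow_const 2) (measurable_id.pow_const 2)).integrable_mul
    hX.integrable_sq hY.integrable_sq
  simpa only [Pi.mul_def, mul_pow, Function.comp_def, id] using hsq

theorem IndepFun.variance_mul_of_integral_eq_zero [IsProbabilityMeasure P] {X Y : Ω → ℝ}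
    (hXY : IndepFun X Y P) (hX : MemLp X 2 P) (hY : MemLp Y 2 P) (hX0 : P[X] = 0) :
    variance (X * Y) P = (∫ ω, X ω ^ 2 ∂P) * ∫ ω, Y ω ^ 2 ∂P := by
  have hsq := (hXY.comp (measurable_id.pow_const 2) (measurable_id.pow_const 2))
    |>.integral_fun_mul_eq_mul_integral hX.integrable_sq.aestronglyMeasurable
      hY.integrable_sq.aestronglyMeasurable
  have hmean : P[X * Y] = 0 := by
    rw [hXY.integral_mul_eq_mul_integral hX.aestronglyMeasurable hY.aestronglyMeasurable, hX0,
      zero_mul]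
  rw [variance_eq_sub (hXY.memLp_two_mul hX hY), hmean]
  simpa [mul_pow, Function.comp_def] using hsq

theorem meas_ge_le_sum_variance_div_sq [IsFiniteMeasure P] {κ : Type*} [Fintype κ]
    {X : κ → Ω → ℝ} (hX : ∀ k, MemLp (X k) 2 P)
    (hindep : Pairwise fun k l => IndepFun (X k) (X l) P) {t : ℝ} (ht : 0 < t) :
    P {ω | t ≤ |∑ k, X k ω - ∑ k, P[X k]|} ≤
      ENNReal.ofReal ((∑ k, variance (X k) P) / t ^ 2) := by
  have hcheb := meas_ge_le_variance_div_sq (memLp_finsetSum' Finset.univ fun k _ => hX k) ht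
  simp only [Finset.sum_apply] at hcheb
  rwa [IndepFun.variance_sum (fun k _ => hX k) fun k _ l _ hkl => hindep hkl,
    integral_finsetSum _ fun k _ => (hX k).integrable one_le_two] at hcheb

theorem measure_sum_sq_le_sub_le [IsProbabilityMeasure P] {κ : Type*} [Fintype κ]
    {X : Ω → ℝ} {Z : κ → Ω → ℝ} (hZ : ∀ k, IdentDistrib (Z k) X P P)
    (hindep : Pairwise fun k l => IndepFun (Z k) (Z l) P) {c t : ℝ} (hc : 0 ≤ c) (ht : 0 < t) :
    P {ω | ∑ k, Z k ω ^ 2 ≤ Fintype.card κ * ∫ ω, min (X ω ^ 2) c ∂P - t} ≤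
      ENNReal.ofReal (Fintype.card κ * (c / 2) ^ 2 / t ^ 2) := by
  set g : ℝ → ℝ := fun x => min (x ^ 2) c
  have hg : Measurable g := (measurable_id.pow_const 2).min measurable_const
  have hgZ_mem : ∀ k ω, (g ∘ Z k) ω ∈ Set.Icc 0 c := fun k ω =>
    ⟨le_min (sq_nonneg _) hc, min_le_right _ _⟩
  have hgZ_meas : ∀ k, AEMeasurable (g ∘ Z k) P := fun k =>
    hg.comp_aemeasurable (hZ k).aemeasurable_fst
  have hgZ_L2 : ∀ k, MemLp (g ∘ Z k) 2 P := fun k =>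
    memLp_of_bounded (ae_of_all _ (hgZ_mem k)) (hgZ_meas k).aestronglyMeasurable 2
  have hgZ_var : ∀ k, variance (g ∘ Z k) P ≤ (c / 2) ^ 2 := fun k => by
    simpa only [sub_zero] using variance_le_sq_of_bounded (ae_of_all _ (hgZ_mem k)) (hgZ_meas k)
  have hgZ_mean : ∀ k, P[g ∘ Z k] = ∫ ω, min (X ω ^ 2) c ∂P := fun k =>
    ((hZ k).comp hg).integral_eq
  have hcheb := meas_ge_le_sum_variance_div_sq hgZ_L2
    (fun k l hkl => (hindep hkl).comp hg hg) ht
  simp only [hgZ_mean, Finset.sum_const, Finset.card_univ, nsmul_eq_mul] at hcheb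
  refine (measure_mono fun ω hω => ?_).trans (hcheb.trans (ENNReal.ofReal_le_ofReal ?_))
  · replace hω : ∑ k, Z k ω ^ 2 ≤ _ := hω
    have hle : ∑ k, g (Z k ω) ≤ ∑ k, Z k ω ^ 2 := Finset.sum_le_sum fun k _ => min_le_left _ _
    simp only [Set.mem_ofPred_eq, Function.comp_apply]
    exact le_abs.2 (Or.inr (by linarith))
  · gcongr
    calc ∑ k, variance (g ∘ Z k) P ≤ ∑ _k : κ, (c / 2) ^ 2 := Finset.sum_le_sum fun k _ => hgZ_var k
      _ = Fintype.card κ * (c / 2) ^ 2 := by simp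

theorem measure_le_sum_mul_le [IsProbabilityMeasure P] {ι κ : Type*} [Fintype κ]
    {ξ : ι → κ → Ω → ℝ} (hindep : iIndepFun (fun p : ι × κ => ξ p.1 p.2) P)
    (hL2 : ∀ i k, MemLp (ξ i k) 2 P) {i j : ι} (hij : i ≠ j) (hmean : ∀ k, P[ξ j k] = 0)
    {t : ℝ} (ht : 0 < t) :
    P {ω | t ≤ ∑ k, ξ j k ω * ξ i k ω} ≤
      ENNReal.ofReal ((∑ k, (∫ ω, ξ j k ω ^ 2 ∂P) * ∫ ω, ξ i k ω ^ 2 ∂P) / t ^ 2) := by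
  have hpair : ∀ k, IndepFun (ξ j k) (ξ i k) P := fun k =>
    hindep.indepFun (i := (j, k)) (j := (i, k)) (by simp [hij.symm])
  have hY_L2 : ∀ k, MemLp (ξ j k * ξ i k) 2 P := fun k =>
    (hpair k).memLp_two_mul (hL2 j k) (hL2 i k)
  have hY_indep : Pairwise fun k l => IndepFun (ξ j k * ξ i k) (ξ j l * ξ i l) P := by
    intro k l hkl
    have h := hindep.indepFun_prodMk_prodMk₀ (fun p => (hL2 p.1 p.2).aemeasurable)
      (j, k) (i, k) (j, l) (i, l) (by simp [hkl]) (by simp [hkl]) (by simp [hkl]) (by simp [hkl])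
    exact h.comp measurable_mul measurable_mul
  have hY_mean : ∀ k, ∫ ω, ξ j k ω * ξ i k ω ∂P = 0 := fun k => by
    rw [(hpair k).integral_fun_mul_eq_mul_integral (hL2 j k).aestronglyMeasurable
      (hL2 i k).aestronglyMeasurable, hmean k, zero_mul]
  have hcheb := meas_ge_le_sum_variance_div_sq hY_L2 hY_indep ht
  simp only [fun k => (hpair k).variance_mul_of_integral_eq_zero (hL2 j k) (hL2 i k) (hmean k),
    Pi.mul_apply, hY_mean, Finset.sum_const_zero, sub_zero] at hcheb
  exact (measure_mono fun ω (hω : t ≤ _) => le_abs.2 (Or.inl hω)).trans hcheb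

theorem measure_exists_inner_gt_inner_self_le [IsProbabilityMeasure P] {ι κ : Type*}
    [Fintype ι] [Fintype κ] [Nonempty κ] {ξ : ι → κ → Ω → ℝ}
    (hindep : iIndepFun (fun p : ι × κ => ξ p.1 p.2) P) (hL2 : ∀ i k, MemLp (ξ i k) 2 P)
    {v : ℝ} (hvar : ∀ i k, ∫ ω, ξ i k ω ^ 2 ∂P = v) {j : ι} (hmean : ∀ k, P[ξ j k] = 0)
    {X : Ω → ℝ} (hX : ∀ k, IdentDistrib (ξ j k) X P P) {c : ℝ} (hc : 0 ≤ c)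
    (hw : 0 < ∫ ω, min (X ω ^ 2) c ∂P) :
    P {ω | ∃ i, ∑ k, ξ j k ω * ξ j k ω < ∑ k, ξ j k ω * ξ i k ω} ≤
      ENNReal.ofReal ((c ^ 2 + 4 * Fintype.card ι * v ^ 2) /
        ((∫ ω, min (X ω ^ 2) c ∂P) ^ 2 * Fintype.card κ)) := by
  classical
  set w := ∫ ω, min (X ω ^ 2) c ∂P
  set n : ℝ := (Fintype.card κ : ℝ)
  have hn : 0 < n := Nat.cast_pos.2 Fintype.card_pos
  set t := n * w / 2
  have ht : 0 < t := by positivity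
  have hnw : n * w - t = t := by simp only [t]; ring
  have hsub : {ω | ∃ i, ∑ k, ξ j k ω * ξ j k ω < ∑ k, ξ j k ω * ξ i k ω} ⊆
      {ω | ∑ k, ξ j k ω ^ 2 ≤ n * w - t} ∪
        ⋃ i ∈ Finset.univ.erase j, {ω | t ≤ ∑ k, ξ j k ω * ξ i k ω} := by
    rintro ω ⟨i, hi⟩
    simp only [← sq] at hi
    by_cases hdiag : ∑ k, ξ j k ω ^ 2 ≤ n * w - t
    · exact Or.inl hdiag
    · have hij : i ≠ j := by rintro rfl; simp [sq] at hi
      refine Or.inr (Set.mem_biUnion (Finset.mem_erase.2 ⟨hij, Finset.mem_univ i⟩) ?_)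
      simp only [Set.mem_ofPred_eq]
      linarith
  have hdiag := measure_sum_sq_le_sub_le hX
    (fun k l hkl => hindep.indepFun (i := (j, k)) (j := (j, l)) (by simp [hkl])) hc ht
  have hcross : ∀ i ∈ Finset.univ.erase j, P {ω | t ≤ ∑ k, ξ j k ω * ξ i k ω} ≤
      ENNReal.ofReal (n * v ^ 2 / t ^ 2) := fun i hi => by
    have h := measure_le_sum_mul_le hindep hL2 (Finset.ne_of_mem_erase hi) hmean ht
    rwa [Finset.sum_congr rfl fun k _ => by rw [hvar, hvar], Finset.sum_const, Finset.card_univ,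
      nsmul_eq_mul, ← sq] at h
  have hcard : ((Finset.univ.erase j).card : ENNReal) ≤ Fintype.card ι :=
    Nat.cast_le.2 ((Finset.card_erase_le).trans_eq Finset.card_univ)
  calc _ ≤ _ := measure_mono hsub
    _ ≤ _ := measure_union_le _ _
    _ ≤ ENNReal.ofReal (n * (c / 2) ^ 2 / t ^ 2) +
          ∑ i ∈ Finset.univ.erase j, ENNReal.ofReal (n * v ^ 2 / t ^ 2) :=
        add_le_add hdiag ((measure_biUnion_finset_le _ _).trans (Finset.sum_le_sum hcross))
    _ ≤ ENNReal.ofReal (n * (c / 2) ^ 2 / t ^ 2) +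
          Fintype.card ι * ENNReal.ofReal (n * v ^ 2 / t ^ 2) := by
        rw [Finset.sum_const, nsmul_eq_mul]
        gcongr
    _ = _ := by
        rw [← ENNReal.ofReal_natCast, ← ENNReal.ofReal_mul (by positivity),
          ← ENNReal.ofReal_add (by positivity) (by positivity)]
        congr 1
        field_simp
        ring

theorem tendsto_measureReal_of_tendsto_measure_compl [IsProbabilityMeasure P] {ι : Type*}
    {l : Filter ι} {E : ι → Set Ω} (hE : Tendsto (fun d => P (E d)ᶜ) l (nhds 0)) :
    Tendsto (fun d => P.real (E d)) l (nhds 1) := by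
  have hcompl : Tendsto (fun d => P.real (E d)ᶜ) l (nhds 0) :=
    (ENNReal.tendsto_toReal ENNReal.zero_ne_top).comp hE
  refine tendsto_of_tendsto_of_tendsto_of_le_of_le (by simpa using tendsto_const_nhds.sub hcompl)
    tendsto_const_nhds (fun d => ?_) fun d => measureReal_le_one
  have h := measureReal_union_le (μ := P) (E d) (E d)ᶜ
  rw [Set.union_compl_self, probReal_univ] at h
  linarith

end ProbabilityTheory

end

theorem stmt0_general
    {Ω : Type*} [MeasurableSpace Ω] (P : Measure Ω) [IsProbabilityMeasure P]
    (m : ℕ)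
    (ξ : (d : ℕ) → Fin m → Fin d → Ω → ℝ)
    (v : ℝ) (hv : 0 < v)
    (hindep : ∀ d : ℕ, iIndepFun
        (fun p : Fin m × Fin d => ξ d p.1 p.2) P)
    (hident : ∀ (d d' : ℕ) (i : Fin m) (i' : Fin m) (k : Fin d) (k' : Fin d'),
        IdentDistrib (ξ d i k) (ξ d' i' k') P P)
    (hL2 : ∀ (d : ℕ) (i : Fin m) (k : Fin d), MemLp (ξ d i k) 2 P)
    (hmean : ∀ (d : ℕ) (i : Fin m) (k : Fin d), ∫ ω, ξ d i k ω ∂P = 0)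
    (hvar : ∀ (d : ℕ) (i : Fin m) (k : Fin d), ∫ ω, (ξ d i k ω) ^ 2 ∂P = v)
    (j : Fin m) :
    Tendsto
      (fun d : ℕ => (P {ω | ∀ i : Fin m,
          ∑ k : Fin d, ξ d j k ω * ξ d i k ω ≤
            ∑ k : Fin d, ξ d j k ω * ξ d j k ω}).toReal)
      atTop (nhds 1) := by
  obtain ⟨c, hc⟩ : ∃ c : ℕ, v / 2 < ∫ ω, min (ξ 1 j 0 ω ^ 2) c ∂P :=
    ((tendsto_integral_min_natCast (hL2 1 j 0).integrable_sq).eventually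
      (eventually_gt_nhds (by rw [hvar]; linarith))).exists
  have hw : 0 < ∫ ω, min (ξ 1 j 0 ω ^ 2) c ∂P := by linarith
  set K := (c ^ 2 + 4 * m * v ^ 2) / (∫ ω, min (ξ 1 j 0 ω ^ 2) c ∂P) ^ 2
  refine tendsto_measureReal_of_tendsto_measure_compl (tendsto_of_tendsto_of_tendsto_of_le_of_le'
    tendsto_const_nhds (h := fun d : ℕ => ENNReal.ofReal (K / d)) ?_
    (Eventually.of_forall fun _ => zero_le) ?_)
  · simpa using ENNReal.tendsto_ofReal (tendsto_const_div_atTop_nhds_zero_nat K)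
  filter_upwards [eventually_ne_atTop 0] with d hd
  have : NeZero d := ⟨hd⟩
  have h := measure_exists_inner_gt_inner_self_le (hindep d) (hL2 d) (hvar d) (hmean d j)
    (fun k => hident d 1 j j k 0) (Nat.cast_nonneg c) hw
  simpa only [Set.compl_ofPred, not_forall, not_le, Fintype.card_fin, K, div_div] using h

/-- In high dimensions, each point of an i.i.d. zero-mean collection is its own
MIPS (maximum inner product search) solution with probability tending to 1. -/
theorem stmt0
    {Ω : Type*} [MeasurableSpace Ω] (P : Measure Ω) [IsProbabilityMeasure P]
    (m : ℕ)
    (ξ : (d : ℕ) → Fin m → Fin d → Ω → ℝ)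
    (v : ℝ) (hv : 0 < v)
    (hmeas : ∀ d i k, Measurable (ξ d i k))
    (hindep : ∀ d : ℕ, iIndepFun
        (fun p : Fin m × Fin d => ξ d p.1 p.2) P)
    (hident : ∀ (d d' : ℕ) (i : Fin m) (i' : Fin m) (k : Fin d) (k' : Fin d'),
        IdentDistrib (ξ d i k) (ξ d' i' k') P P)
    (hL2 : ∀ (d : ℕ) (i : Fin m) (k : Fin d), MemLp (ξ d i k) 2 P)
    (hmean : ∀ (d : ℕ) (i : Fin m) (k : Fin d), ∫ ω, ξ d i k ω ∂P = 0)
    (hvar : ∀ (d : ℕ) (i : Fin m) (k : Fin d), ∫ ω, (ξ d i k ω) ^ 2 ∂P = v)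
    (j : Fin m) :
    Tendsto
      (fun d : ℕ => (P {ω | ∀ i : Fin m,
          ∑ k : Fin d, ξ d j k ω * ξ d i k ω ≤
            ∑ k : Fin d, ξ d j k ω * ξ d j k ω}).toReal)
      atTop (nhds 1) :=
  stmt0_general P m ξ v hv hindep hident hL2 hmean hvar j
end

section
/- For any finite metric space (X, δ), the doubling dimension of X is at most 4 times its Karger–Ruhl expansion rate: d_dbl ≤ 4·d_KR. -/
/-!
A maximal `r`-separated subset `F` of `B(x, 2r)` is an `r`-net of it. For `y ∈ F` the balls
`B(y, r/2)` are pairwise disjoint and lie in `B(x, 4r) ⊆ B(y, 8r)`, while four applications of the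
expansion bound give `|B(y, 8r)| ≤ 2^(4k) |B(y, r/2)|`. Summing over `F`,
`|F| |B(x, 4r)| ≤ 2^(4k) |B(x, 4r)|`.
-/

open Metric
open scoped NNReal

lemma exists_finset_isSeparated_isCover {X : Type*} [PseudoEMetricSpace X] [Finite X]
    (ε : ℝ≥0) (s : Set X) :
    ∃ F : Finset X, ↑F ⊆ s ∧ IsSeparated ε (F : Set X) ∧ IsCover ε s F := by
  obtain ⟨N, hN⟩ := Set.Finite.exists_maximal (s := {N : Set X | N ⊆ s ∧ IsSeparated ε N})
    (Set.toFinite _) ⟨∅, Set.empty_subset s, .empty⟩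
  refine ⟨N.toFinite.toFinset, ?_⟩
  simpa using ⟨hN.prop.1, hN.prop.2, IsCover.of_maximal_isSeparated hN⟩

section PseudoMetricSpace

variable {X : Type*} [PseudoMetricSpace X]

variable (X) in
def ExpansionRateLE (k : ℝ) : Prop :=
  ∀ (x : X) (r : ℝ), 0 < r →
    (Nat.card (closedBall x (2 * r)) : ℝ) ≤ 2 ^ k * Nat.card (closedBall x r)

lemma ExpansionRateLE.card_closedBall_two_pow_mul_le {k : ℝ} (h : ExpansionRateLE X k) (x : X)
    {r : ℝ} (hr : 0 < r) (n : ℕ) :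
    (Nat.card (closedBall x (2 ^ n * r)) : ℝ) ≤ (2 ^ k) ^ n * Nat.card (closedBall x r) := by
  induction n with
  | zero => simp
  | succ n ih =>
    calc (Nat.card (closedBall x (2 ^ (n + 1) * r)) : ℝ)
        = Nat.card (closedBall x (2 * (2 ^ n * r))) := by rw [pow_succ', mul_assoc]
      _ ≤ 2 ^ k * Nat.card (closedBall x (2 ^ n * r)) := h x _ (by positivity)
      _ ≤ 2 ^ k * ((2 ^ k) ^ n * Nat.card (closedBall x r)) := by gcongr
      _ = (2 ^ k) ^ (n + 1) * Nat.card (closedBall x r) := by ring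

lemma isSeparated_coe_iff_pairwise_lt_dist {ε : ℝ≥0} {s : Set X} :
    IsSeparated ε s ↔ s.Pairwise fun a b => ε < dist a b := by
  simp only [IsSeparated, edist_nndist, ENNReal.coe_lt_coe, ← NNReal.coe_lt_coe, coe_nndist]

lemma exists_finset_subset_pairwise_lt_dist_cover [Finite X] {r : ℝ} (hr : 0 ≤ r) (s : Set X) :
    ∃ F : Finset X, ↑F ⊆ s ∧ (F : Set X).Pairwise (fun a b => r < dist a b) ∧
      s ⊆ ⋃ y ∈ F, closedBall y r := by
  lift r to ℝ≥0 using hr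
  obtain ⟨F, hFs, hsep, hcover⟩ := exists_finset_isSeparated_isCover r s
  refine ⟨F, hFs, isSeparated_coe_iff_pairwise_lt_dist.1 hsep, ?_⟩
  simpa using hcover.subset_iUnion_closedBall

lemma sum_card_closedBall_le_card [Finite X] {F : Finset X} {ρ : ℝ} {t : Set X}
    (hF : (F : Set X).Pairwise fun a b => 2 * ρ < dist a b)
    (ht : ∀ y ∈ F, closedBall y ρ ⊆ t) :
    ∑ y ∈ F, Nat.card (closedBall y ρ) ≤ Nat.card t := by
  have hdisj : (F : Set X).PairwiseDisjoint fun y => closedBall y ρ :=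
    hF.mono' fun a b hab => closedBall_disjoint_closedBall (by linarith)
  simp only [Nat.card_coe_set_eq, ← finsum_mem_coe_finset]
  rw [← F.finite_toSet.ncard_biUnion (fun _ _ => Set.toFinite _) hdisj]
  exact Set.ncard_le_ncard (Set.iUnion₂_subset ht)

lemma card_le_of_pairwise_lt_dist [Finite X] {F : Finset X} {ρ R C : ℝ} {t : Set X}
    (hC : 0 ≤ C) (ht : t.Nonempty) (hF : (F : Set X).Pairwise fun a b => 2 * ρ < dist a b)
    (hin : ∀ y ∈ F, closedBall y ρ ⊆ t) (hout : ∀ y ∈ F, t ⊆ closedBall y R)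
    (hR : ∀ y ∈ F, (Nat.card (closedBall y R) : ℝ) ≤ C * Nat.card (closedBall y ρ)) :
    (F.card : ℝ) ≤ C := by
  have ht_pos : (0 : ℝ) < Nat.card t := by
    have := ht.to_subtype
    exact_mod_cast Nat.card_pos
  refine le_of_mul_le_mul_right ?_ ht_pos
  calc (F.card : ℝ) * Nat.card t = ∑ _y ∈ F, (Nat.card t : ℝ) := by simp
    _ ≤ ∑ y ∈ F, (Nat.card (closedBall y R) : ℝ) := by
      gcongr with y hy
      exact_mod_cast Nat.card_mono (Set.toFinite _) (hout y hy)
    _ ≤ ∑ y ∈ F, C * Nat.card (closedBall y ρ) := Finset.sum_le_sum hR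
    _ ≤ C * Nat.card t := by
      rw [← Finset.mul_sum]
      gcongr
      exact_mod_cast sum_card_closedBall_le_card hF hin

end PseudoMetricSpace

theorem stmt4_general
    {X : Type*} [MetricSpace X] [Fintype X] (kKR : ℝ)
    (hKR : ∀ (x : X) (r : ℝ), 0 < r →
      (Nat.card ↥(Metric.closedBall x (2 * r)) : ℝ) ≤
        (2 : ℝ) ^ kKR * (Nat.card ↥(Metric.closedBall x r) : ℝ)) :
    ∀ (x : X) (r : ℝ), 0 < r → ∃ F : Finset X,
      (F.card : ℝ) ≤ (2 : ℝ) ^ (4 * kKR) ∧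
      Metric.closedBall x (2 * r) ⊆ ⋃ y ∈ F, Metric.closedBall y r := by
  intro x r hr
  obtain ⟨F, hFx, hsep, hcover⟩ :=
    exists_finset_subset_pairwise_lt_dist_cover hr.le (closedBall x (2 * r))
  have hF_near (y) (hy : y ∈ F) : dist y x ≤ 2 * r := mem_closedBall.1 (hFx hy)
  refine ⟨F, ?_, hcover⟩
  refine card_le_of_pairwise_lt_dist (ρ := r / 2) (R := 8 * r) (t := closedBall x (4 * r))
    (by positivity) ⟨x, mem_closedBall_self (by positivity)⟩
    (by rwa [mul_div_cancel₀ r two_ne_zero]) ?_ ?_ ?_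
  · exact fun y hy => closedBall_subset_closedBall' (by linarith [hF_near y hy])
  · exact fun y hy => closedBall_subset_closedBall' (by linarith [hF_near y hy, dist_comm x y])
  · intro y _
    rw [show 4 * kKR = kKR * (4 : ℕ) by push_cast; ring, Real.rpow_mul_natCast zero_le_two,
      show 8 * r = 2 ^ 4 * (r / 2) by ring]
    exact ExpansionRateLE.card_closedBall_two_pow_mul_le hKR y (half_pos hr) 4

/-- For any finite metric space, the doubling dimension is at most four times
the Karger–Ruhl expansion rate: if `|B(x,2r)| ≤ 2^k |B(x,r)|` for all `x, r`,
then every ball of radius `2r` can be covered by at most `2^(4k)` balls of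
radius `r`. -/
theorem stmt4
    {X : Type*} [MetricSpace X] [Fintype X] (kKR : ℝ) (hk : 0 ≤ kKR)
    (hKR : ∀ (x : X) (r : ℝ), 0 < r →
      (Nat.card ↥(Metric.closedBall x (2 * r)) : ℝ) ≤
        (2 : ℝ) ^ kKR * (Nat.card ↥(Metric.closedBall x r) : ℝ)) :
    ∀ (x : X) (r : ℝ), 0 < r → ∃ F : Finset X,
      (F.card : ℝ) ≤ (2 : ℝ) ^ (4 * kKR) ∧
      Metric.closedBall x (2 * r) ⊆ ⋃ y ∈ F, Metric.closedBall y r :=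
  stmt4_general kKR hKR
end

section
/- Let X ⊂ R^d be a collection of vectors each having at most n non-zero coordinates. Then the doubling dimension of X (with Euclidean metric) is at most Cn + n·log₂ d for some universal constant C. -/
/-!
An `n`-sparse vector of `ℝ^d` lies in one of the `C(d, n) ≤ d ^ n` coordinate subspaces spanned
by `n` basis vectors. Inside an `n`-dimensional subspace, a `2r`-ball meets it in a set that
(after recentring at the orthogonal projection of the centre) is covered by `5 ^ n` balls of
radius `r`, by the volume argument behind Besicovitch's packing bound. Summing over the subspaces
gives at most `(5 d) ^ n ≤ 2 ^ (3 n + n log₂ d)` balls.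
-/

open Metric Set Module
open scoped NNReal ENNReal

lemma Set.encard_le_of_forall_finset_card_le {α : Type*} {s : Set α} {k : ℕ}
    (h : ∀ t : Finset α, ↑t ⊆ s → t.card ≤ k) : s.encard ≤ k := by
  by_contra! hk
  obtain ⟨t, hts, ht⟩ := exists_subset_encard_eq (Order.add_one_le_of_lt hk)
  have htfin : t.Finite := finite_of_encard_eq_coe ht
  have hcard := h htfin.toFinset (by simpa using hts)
  rw [htfin.encard_eq_coe_toFinset_card] at ht
  norm_cast at ht
  omega

namespace Metric

section Packing

variable {E : Type*} [NormedAddCommGroup E] [NormedSpace ℝ E] [FiniteDimensional ℝ E]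

lemma card_le_of_isSeparated_of_subset_closedBall {F : Finset E} {x : E} {ε : ℝ≥0}
    (hε : ε ≠ 0) (hF : (F : Set E) ⊆ closedBall x (2 * ε)) (hsep : IsSeparated ε (F : Set E)) :
    F.card ≤ 5 ^ finrank ℝ E := by
  have hε' : (0 : ℝ) < ε := by positivity
  set g : E → E := fun u => (ε : ℝ)⁻¹ • (u - x)
  have hdist (u v : E) : dist (g u) (g v) = (ε : ℝ)⁻¹ * dist u v := by
    simp [g, dist_smul₀]
  have hg : Function.Injective g := fun u v huv => by
    simpa [hε'.ne'] using (hdist u v).symm.trans (dist_eq_zero.2 huv)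
  rw [← Finset.card_map ⟨g, hg⟩]
  refine Besicovitch.card_le_of_separated _ ?_ ?_
  · simp only [Finset.forall_mem_map, Function.Embedding.coeFn_mk]
    intro u hu
    have hux : dist u x ≤ 2 * ε := hF hu
    rw [← dist_zero_right, show (0 : E) = g x by simp [g], hdist]
    calc (ε : ℝ)⁻¹ * dist u x ≤ (ε : ℝ)⁻¹ * (2 * ε) := by gcongr
      _ = 2 := by field_simp
  · simp only [Finset.forall_mem_map, Function.Embedding.coeFn_mk]
    intro u hu v hv huv
    have hεuv : (ε : ℝ) < dist u v := by
      have : (ε : ℝ≥0∞) < edist u v := hsep hu hv (ne_of_apply_ne _ huv)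
      rw [edist_nndist] at this
      exact_mod_cast this
    rw [← dist_eq_norm, hdist]
    calc (1 : ℝ) = (ε : ℝ)⁻¹ * ε := by field_simp
      _ ≤ (ε : ℝ)⁻¹ * dist u v := by gcongr

lemma packingNumber_closedBall_two_mul_le (x : E) {ε : ℝ≥0} (hε : ε ≠ 0) :
    packingNumber ε (closedBall x (2 * ε)) ≤ 5 ^ finrank ℝ E := by
  simp only [packingNumber, iSup_le_iff]
  intro C hC hsep
  exact_mod_cast encard_le_of_forall_finset_card_le fun F hF =>
    card_le_of_isSeparated_of_subset_closedBall hε (hF.trans hC) (hsep.subset hF)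

end Packing

lemma _root_.Submodule.externalCoveringNumber_inter_closedBall_two_mul_le {E : Type*}
    [NormedAddCommGroup E] [InnerProductSpace ℝ E] (K : Submodule ℝ E) [FiniteDimensional ℝ K]
    (x : E) {ε : ℝ≥0} (hε : ε ≠ 0) :
    externalCoveringNumber ε ((K : Set E) ∩ closedBall x (2 * ε)) ≤ 5 ^ finrank ℝ K := by
  set p : K := K.orthogonalProjectionOnto x
  -- the projection onto `K` fixes `K` and is `1`-Lipschitz, so the ball may be recentred at `p`
  have hsub : (K : Set E) ∩ closedBall x (2 * ε) ⊆ (↑) '' closedBall p (2 * ε) := by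
    rintro u ⟨huK, hux⟩
    refine ⟨⟨u, huK⟩, ?_, rfl⟩
    have hproj : K.starProjection (u - x) = u - p := by
      rw [map_sub, K.starProjection_eq_self_iff.2 huK]
      rfl
    calc dist (⟨u, huK⟩ : K) p = ‖K.starProjection (u - x)‖ := by
          rw [hproj, Subtype.dist_eq, dist_eq_norm]
      _ ≤ ‖u - x‖ := K.norm_starProjection_apply_le _
      _ ≤ 2 * ε := mem_closedBall_iff_norm.1 hux
  calc externalCoveringNumber ε ((K : Set E) ∩ closedBall x (2 * ε))
      ≤ externalCoveringNumber ε (((↑) : K → E) '' closedBall p (2 * ε)) :=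
        externalCoveringNumber_mono_set hsub
    _ ≤ coveringNumber ε (((↑) : K → E) '' closedBall p (2 * ε)) :=
        externalCoveringNumber_le_coveringNumber _ _
    _ = coveringNumber ε (closedBall p (2 * ε)) := isometry_subtype_coe.coveringNumber_image
    _ ≤ packingNumber ε (closedBall p (2 * ε)) := coveringNumber_le_packingNumber _ _
    _ ≤ 5 ^ finrank ℝ K := packingNumber_closedBall_two_mul_le p hε

section Union

variable {X : Type*} [PseudoEMetricSpace X]

lemma exists_isCover_encard_eq_externalCoveringNumber (ε : ℝ≥0) (A : Set X) :
    ∃ C, IsCover ε A C ∧ C.encard = externalCoveringNumber ε A := by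
  have : Nonempty {C : Set X // IsCover ε A C} := ⟨⟨A, .rfl⟩⟩
  obtain ⟨⟨C, hC⟩, hmin⟩ :=
    ENat.exists_eq_iInf fun C : {C : Set X // IsCover ε A C} => C.1.encard
  exact ⟨C, hC, by rw [hmin, externalCoveringNumber, iInf_subtype']⟩

lemma externalCoveringNumber_union_le (ε : ℝ≥0) (A B : Set X) :
    externalCoveringNumber ε (A ∪ B) ≤ externalCoveringNumber ε A + externalCoveringNumber ε B := by
  obtain ⟨C, hC, hCA⟩ := exists_isCover_encard_eq_externalCoveringNumber ε A
  obtain ⟨D, hD, hDB⟩ := exists_isCover_encard_eq_externalCoveringNumber ε B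
  calc externalCoveringNumber ε (A ∪ B) ≤ (C ∪ D).encard :=
        IsCover.externalCoveringNumber_le_encard (hC.union hD)
    _ ≤ C.encard + D.encard := encard_union_le C D
    _ = _ := by rw [hCA, hDB]

lemma externalCoveringNumber_biUnion_le {ι : Type*} (ε : ℝ≥0) (s : Finset ι) (A : ι → Set X) :
    externalCoveringNumber ε (⋃ i ∈ s, A i) ≤ ∑ i ∈ s, externalCoveringNumber ε (A i) := by
  classical
  induction s using Finset.induction_on with
  | empty => simp
  | insert i s hi ih =>
    rw [Finset.set_biUnion_insert, Finset.sum_insert hi]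
    exact (externalCoveringNumber_union_le ε _ _).trans (add_le_add_right ih _)

end Union

lemma exists_finset_subset_iUnion_closedBall_of_externalCoveringNumber_le {X : Type*}
    [PseudoMetricSpace X] {ε : ℝ≥0} {A : Set X} {N : ℕ} (h : externalCoveringNumber ε A ≤ N) :
    ∃ T : Finset X, T.card ≤ N ∧ A ⊆ ⋃ y ∈ T, closedBall y ε := by
  obtain ⟨C, hC, hCA⟩ := exists_isCover_encard_eq_externalCoveringNumber ε A
  have hC_le : C.encard ≤ N := hCA ▸ h
  have hCfin : C.Finite := finite_of_encard_le_coe hC_le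
  refine ⟨hCfin.toFinset, ?_, by simpa using hC.subset_iUnion_closedBall⟩
  rw [hCfin.encard_eq_coe_toFinset_card] at hC_le
  exact_mod_cast hC_le

end Metric

namespace EuclideanSpace

variable {ι : Type*} [Fintype ι]

def coordinateSubspace (S : Finset ι) : Submodule ℝ (EuclideanSpace ℝ ι) :=
  Submodule.span ℝ ((EuclideanSpace.basisFun ι ℝ).toBasis '' S)

lemma mem_coordinateSubspace {S : Finset ι} {u : EuclideanSpace ℝ ι} :
    u ∈ coordinateSubspace S ↔ ∀ i ∉ S, u i = 0 := by
  rw [coordinateSubspace, Basis.mem_span_image]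
  simp [Set.subset_def, not_imp_comm]

lemma finrank_coordinateSubspace_le (S : Finset ι) :
    finrank ℝ (coordinateSubspace S) ≤ S.card := by
  classical
  rw [coordinateSubspace, ← Finset.coe_image]
  exact (finrank_span_finset_le_card _).trans Finset.card_image_le

end EuclideanSpace

section Sparse

open EuclideanSpace

variable {d n : ℕ} {X : Set (EuclideanSpace ℝ (Fin d))}

open scoped Classical in
/-- Enlarging each support to exactly `min n d` coordinates, `C(d, min n d)` subspaces suffice. -/
lemma subset_iUnion_coordinateSubspace_of_sparse
    (hX : ∀ u ∈ X, (Finset.univ.filter (fun i : Fin d => u i ≠ 0)).card ≤ n) :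
    X ⊆ ⋃ (S : Finset (Fin d)) (_ : S ∈ Finset.univ.powersetCard (min n d)),
      (coordinateSubspace S : Set (EuclideanSpace ℝ (Fin d))) := by
  intro u hu
  set supp := Finset.univ.filter (fun i : Fin d => u i ≠ 0)
  have hsupp : supp.card ≤ min n d := le_min (hX u hu) (card_finset_fin_le supp)
  obtain ⟨S, hsuppS, hS⟩ := Finset.exists_superset_card_eq hsupp (by simp)
  simp only [mem_iUnion, Finset.mem_powersetCard_univ, SetLike.mem_coe, mem_coordinateSubspace]
  exact ⟨S, hS, fun i hi => by_contra fun hui => hi (hsuppS (by simpa [supp] using hui))⟩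

open scoped Classical in
lemma externalCoveringNumber_closedBall_inter_sparse_le
    (hX : ∀ u ∈ X, (Finset.univ.filter (fun i : Fin d => u i ≠ 0)).card ≤ n)
    (x : EuclideanSpace ℝ (Fin d)) {ε : ℝ≥0} (hε : ε ≠ 0) :
    externalCoveringNumber ε (closedBall x (2 * ε) ∩ X) ≤
      (d.choose (min n d) * 5 ^ min n d : ℕ) := by
  set m := min n d
  set piece : Finset (Fin d) → Set (EuclideanSpace ℝ (Fin d)) := fun S =>
    (coordinateSubspace S : Set _) ∩ closedBall x (2 * ε)
  calc externalCoveringNumber ε (closedBall x (2 * ε) ∩ X)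
      ≤ externalCoveringNumber ε (⋃ S ∈ Finset.univ.powersetCard m, piece S) := by
        refine externalCoveringNumber_mono_set fun u ⟨hux, huX⟩ => ?_
        obtain ⟨S, hS, huS⟩ := mem_iUnion₂.1 (subset_iUnion_coordinateSubspace_of_sparse hX huX)
        exact mem_iUnion₂.2 ⟨S, hS, huS, hux⟩
    _ ≤ ∑ S ∈ Finset.univ.powersetCard m, externalCoveringNumber ε (piece S) :=
        externalCoveringNumber_biUnion_le ε _ piece
    _ ≤ ∑ S ∈ Finset.univ.powersetCard m, (5 ^ m : ℕ∞) := by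
        refine Finset.sum_le_sum fun S hS => ?_
        refine (Submodule.externalCoveringNumber_inter_closedBall_two_mul_le _ x hε).trans ?_
        exact pow_le_pow_right₀ (by norm_num)
          ((finrank_coordinateSubspace_le S).trans (Finset.mem_powersetCard.1 hS).2.le)
    _ = (d.choose m * 5 ^ m : ℕ) := by simp [Finset.card_powersetCard]

end Sparse

lemma choose_mul_five_pow_le_two_rpow (d n : ℕ) :
    ((d.choose (min n d) * 5 ^ min n d : ℕ) : ℝ) ≤ 2 ^ (3 * n + n * Real.logb 2 d) := by
  rcases Nat.eq_zero_or_pos d with rfl | hd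
  · -- here `Real.logb 2 0 = 0`
    simpa using Real.one_le_rpow one_le_two (by positivity : (0 : ℝ) ≤ 3 * n)
  have hnat : d.choose (min n d) * 5 ^ min n d ≤ d ^ n * 8 ^ n := by
    apply Nat.mul_le_mul
    · exact (Nat.choose_le_pow _ _).trans (Nat.pow_le_pow_right hd (min_le_left n d))
    · exact (Nat.pow_le_pow_left (by norm_num) _).trans
        (Nat.pow_le_pow_right (by norm_num) (min_le_left n d))
  have h8 : (2 : ℝ) ^ (3 * (n : ℝ)) = 8 ^ n := by
    rw [Real.rpow_mul zero_le_two, Real.rpow_natCast]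
    norm_num
  have hd' : (2 : ℝ) ^ ((n : ℝ) * Real.logb 2 d) = d ^ n := by
    rw [mul_comm, Real.rpow_mul zero_le_two,
      Real.rpow_logb two_pos (by norm_num) (by exact_mod_cast hd), Real.rpow_natCast]
  rw [Real.rpow_add two_pos, h8, hd', mul_comm ((8 : ℝ) ^ n)]
  exact_mod_cast hnat

open scoped Classical in
/-- A collection of `n`-sparse vectors in `ℝ^d` has doubling dimension at most
`C n + n log₂ d` for a universal constant `C`. -/
theorem stmt7 :
    ∃ C : ℝ, 0 < C ∧
      ∀ (d n : ℕ) (X : Set (EuclideanSpace ℝ (Fin d))),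
        (∀ u ∈ X, (Finset.univ.filter (fun i : Fin d => u i ≠ 0)).card ≤ n) →
        ∀ (x : EuclideanSpace ℝ (Fin d)) (r : ℝ), 0 < r →
          ∃ T : Finset (EuclideanSpace ℝ (Fin d)),
            (T.card : ℝ) ≤ (2 : ℝ) ^ (C * n + n * Real.logb 2 d) ∧
            Metric.closedBall x (2 * r) ∩ X ⊆ ⋃ y ∈ T, Metric.closedBall y r := by
  refine ⟨3, three_pos, fun d n X hX x r hr => ?_⟩
  lift r to ℝ≥0 using hr.le
  obtain ⟨T, hTcard, hT⟩ := exists_finset_subset_iUnion_closedBall_of_externalCoveringNumber_le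
    (externalCoveringNumber_closedBall_inter_sparse_le hX x (ε := r) (by exact_mod_cast hr.ne'))
  exact ⟨T, (Nat.cast_le.2 hTcard).trans (choose_mul_five_pow_le_two_rpow d n), hT⟩
end

section
/- For a (r, (1+ε)r, p₁, p₂)-sensitive family with ρ = ln p₁ / ln p₂, set L = m^ρ hash tables each using ℓ = log_{1/p₂} m concatenated hash functions. Then (a) if some data point u* satisfies δ(q,u*) ≤ r, the probability that g_i(u*) = g_i(q) for at least one of the L tables is at least 1 - (1 - m^{-ρ})^{m^ρ} ≈ 1 - 1/e; and (b) the expected number of data points v with δ(q,v) > (1+ε)r that collide with q in at least one of the L tables is at most L, so with probability at least 3/4 at most 4L such far points collide. -/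
open MeasureTheory ProbabilityTheory

/-- Correctness of LSH for the point-location-in-equal-balls problem: with
`ρ = ln p₁ / ln p₂`, `L = m^ρ` tables and `ℓ = log_{1/p₂} m` concatenated hashes
per table (so `p₂^ℓ = 1/m`), (a) a data point `u*` with `δ(q,u*) ≤ r` collides
with `q` in at least one table with probability at least `1 - (1 - m^{-ρ})^L`,
and (b) the expected number of far points (`δ > (1+ε)r`) colliding with `q` in
some table is at most `L`, so with probability at least `3/4` at most `4L` far
points collide. -/
theorem stmt12
    {Ω : Type*} [MeasurableSpace Ω] (P : Measure Ω) [IsProbabilityMeasure P]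
    {α β Θ : Type*} [MeasurableSpace Θ]
    (δ : α → α → ℝ) (h : Θ → α → β)
    (hhmeas : ∀ u' v' : α, MeasurableSet {t : Θ | h t u' = h t v'})
    (r ε p₁ p₂ : ℝ) (hε : 0 < ε) (hp₂ : 0 < p₂) (hp : p₂ < p₁) (hp₁ : p₁ < 1)
    (m : ℕ) (hm : 0 < m) (X : Fin m → α) (q : α)
    (ρ : ℝ) (hρ : ρ = Real.log p₁ / Real.log p₂)
    (L ℓ : ℕ)
    (hℓ : (p₂ : ℝ) ^ ℓ = 1 / m)
    (hL : (L : ℝ) = (m : ℝ) ^ ρ)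
    (θ : Fin L → Fin ℓ → Ω → Θ)
    (hθmeas : ∀ i j, Measurable (θ i j))
    (hθindep : iIndepFun
        (fun p : Fin L × Fin ℓ => θ p.1 p.2) P)
    (hsens₁ : ∀ (i : Fin L) (j : Fin ℓ) (u' v' : α), δ u' v' ≤ r →
        p₁ ≤ (P {ω | h (θ i j ω) u' = h (θ i j ω) v'}).toReal)
    (hsens₂ : ∀ (i : Fin L) (j : Fin ℓ) (u' v' : α), (1 + ε) * r < δ u' v' →
        (P {ω | h (θ i j ω) u' = h (θ i j ω) v'}).toReal ≤ p₂)
    (istar : Fin m) (hnear : δ q (X istar) ≤ r) :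
    (1 - (1 - 1 / (m : ℝ) ^ ρ) ^ L ≤
        (P {ω | ∃ i : Fin L, ∀ j : Fin ℓ,
            h (θ i j ω) (X istar) = h (θ i j ω) q}).toReal) ∧
    ((∫ ω, (Nat.card {k : Fin m // (1 + ε) * r < δ q (X k) ∧
        ∃ i : Fin L, ∀ j : Fin ℓ, h (θ i j ω) (X k) = h (θ i j ω) q} : ℝ) ∂P)
      ≤ L) ∧
    ((3 : ℝ) / 4 ≤ (P {ω | (Nat.card {k : Fin m // (1 + ε) * r < δ q (X k) ∧
        ∃ i : Fin L, ∀ j : Fin ℓ, h (θ i j ω) (X k) = h (θ i j ω) q} : ℝ)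
          ≤ 4 * L}).toReal) := by
  classical
  have hp₁pos : (0:ℝ) < p₁ := hp₂.trans hp
  have hmpos : (0:ℝ) < (m:ℝ) := by exact_mod_cast hm
  -- sets
  set Sst : α → Set Θ := fun u => {t : Θ | h t u = h t q} with hSdef
  have hSmeas : ∀ u, MeasurableSet (Sst u) := fun u => hhmeas u q
  set A : α → Fin L → Fin ℓ → Set Ω := fun u i j => θ i j ⁻¹' Sst u with hAdef
  have hAmeas : ∀ u i j, MeasurableSet (A u i j) := fun u i j => hθmeas i j (hSmeas u)
  set B : α → Fin L → Set Ω := fun u i => ⋂ j, A u i j with hBdef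
  have hBmeas : ∀ u i, MeasurableSet (B u i) :=
    fun u i => MeasurableSet.iInter fun j => hAmeas u i j
  have hEventEq : ∀ u : α, {ω | ∃ i : Fin L, ∀ j : Fin ℓ,
      h (θ i j ω) u = h (θ i j ω) q} = ⋃ i, B u i := by
    intro u; ext ω
    simp [hBdef, hAdef, hSdef, Set.mem_iUnion, Set.mem_iInter, Set.mem_preimage]
  have hEvmeas : ∀ u : α, MeasurableSet {ω | ∃ i : Fin L, ∀ j : Fin ℓ,
      h (θ i j ω) u = h (θ i j ω) q} := by
    intro u; rw [hEventEq]; exact MeasurableSet.iUnion fun i => hBmeas u i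
  -- within-table product
  have hprod : ∀ (u : α) (i : Fin L), P (B u i) = ∏ j, P (A u i j) := by
    intro u i
    have hinj : ∀ x ∈ (Finset.univ : Finset (Fin ℓ)), ∀ y ∈ Finset.univ,
        (i, x) = (i, y) → x = y := by
      intro x _ y _ hxy; exact (Prod.mk.injEq _ _ _ _).mp hxy |>.2
    have hmb := hθindep.meas_biInter
      (S := (Finset.univ : Finset (Fin ℓ)).image fun j => (i, j))
      (s := fun p => A u p.1 p.2) (fun p _ => ⟨Sst u, hSmeas u, rfl⟩)
    have hset : (⋂ p ∈ (Finset.univ : Finset (Fin ℓ)).image (fun j => (i, j)),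
        A u p.1 p.2) = B u i := by
      ext ω; simp [hBdef, Set.mem_iInter]
    rw [hset, Finset.prod_image hinj] at hmb
    simpa using hmb
  have hBtoReal : ∀ (u : α) (i : Fin L),
      (P (B u i)).toReal = ∏ j, (P (A u i j)).toReal := by
    intro u i; rw [hprod]; exact ENNReal.toReal_prod _ _
  -- sensitivity rephrased
  have hAform : ∀ u i j, A u i j = {ω | h (θ i j ω) q = h (θ i j ω) u} := by
    intro u i j; ext ω
    simp only [hAdef, hSdef, Set.mem_preimage, Set.mem_setOf_eq]
    exact eq_comm
  have hAnear : ∀ i j, p₁ ≤ (P (A (X istar) i j)).toReal := by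
    intro i j; rw [hAform]; exact hsens₁ i j q (X istar) hnear
  have hAfar : ∀ (k : Fin m), (1 + ε) * r < δ q (X k) →
      ∀ i j, (P (A (X k) i j)).toReal ≤ p₂ := by
    intro k hk i j; rw [hAform]; exact hsens₂ i j q (X k) hk
  -- key exponent identity
  have hkey : p₁ ^ ℓ = 1 / (m:ℝ) ^ ρ := by
    have hlogp₂ : Real.log p₂ < 0 := Real.log_neg hp₂ (hp.trans hp₁)
    have hlp₂ : Real.log p₂ ≠ 0 := ne_of_lt hlogp₂
    have h1 : (ℓ:ℝ) * Real.log p₂ = - Real.log m := by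
      have := congrArg Real.log hℓ
      rwa [Real.log_pow, one_div, Real.log_inv] at this
    have h2 : (ℓ:ℝ) * Real.log p₁ = -(ρ * Real.log m) := by
      rw [hρ]; field_simp; linear_combination Real.log p₁ * h1
    have e1 : p₁ ^ ℓ = Real.exp ((ℓ:ℝ) * Real.log p₁) := by
      rw [← Real.log_pow, Real.exp_log (pow_pos hp₁pos ℓ)]
    rw [e1, Real.rpow_def_of_pos hmpos, one_div, ← Real.exp_neg, h2]
    congr 1; ring
  -- cross-table independence: product over complements
  have hcompl : ∀ (u : α) (s : Finset (Fin L)),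
      P (⋂ i ∈ s, (B u i)ᶜ) = ∏ i ∈ s, P ((B u i)ᶜ) := by
    intro u s
    induction s using Finset.induction with
    | empty => simp
    | @insert a s ha ih =>
      rw [Finset.set_biInter_insert, Finset.prod_insert ha, ← ih]
      have hdisj : Disjoint {p : Fin L × Fin ℓ | p.1 = a} {p : Fin L × Fin ℓ | p.1 ∈ s} := by
        rw [Set.disjoint_left]
        rintro ⟨i, j⟩ h1 h2
        simp only [Set.mem_setOf_eq] at h1 h2
        exact ha (h1 ▸ h2)
      have hind := indep_iSup_of_disjoint
        (m := fun p : Fin L × Fin ℓ =>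
          MeasurableSpace.comap (θ p.1 p.2) inferInstance)
        (fun p => (hθmeas p.1 p.2).comap_le) hθindep.iIndep hdisj
      have hm1 : MeasurableSet[⨆ p ∈ {p : Fin L × Fin ℓ | p.1 = a},
          MeasurableSpace.comap (θ p.1 p.2) inferInstance] ((B u a)ᶜ) := by
        apply MeasurableSet.compl
        apply MeasurableSet.iInter
        intro j
        exact (le_iSup₂ (f := fun (p : Fin L × Fin ℓ)
          (_ : p ∈ {p : Fin L × Fin ℓ | p.1 = a}) =>
          MeasurableSpace.comap (θ p.1 p.2) inferInstance) (a, j) rfl)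
          _ ⟨Sst u, hSmeas u, rfl⟩
      have hm2 : MeasurableSet[⨆ p ∈ {p : Fin L × Fin ℓ | p.1 ∈ s},
          MeasurableSpace.comap (θ p.1 p.2) inferInstance] (⋂ i ∈ s, (B u i)ᶜ) := by
        apply MeasurableSet.biInter s.countable_toSet
        intro i hi
        apply MeasurableSet.compl
        apply MeasurableSet.iInter
        intro j
        exact (le_iSup₂ (f := fun (p : Fin L × Fin ℓ)
          (_ : p ∈ {p : Fin L × Fin ℓ | p.1 ∈ s}) =>
          MeasurableSpace.comap (θ p.1 p.2) inferInstance) (i, j) hi)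
          _ ⟨Sst u, hSmeas u, rfl⟩
      exact (Indep_iff _ _ _).mp hind _ _ hm1 hm2
  -- real-valued table collision probabilities
  have hble : ∀ (u : α) (i : Fin L), P (B u i) ≤ 1 := fun u i => prob_le_one
  have hcomplReal : ∀ (u : α) (i : Fin L),
      (P ((B u i)ᶜ)).toReal = 1 - (P (B u i)).toReal := by
    intro u i
    rw [prob_compl_eq_one_sub (hBmeas u i),
      ENNReal.toReal_sub_of_le (hble u i) ENNReal.one_ne_top, ENNReal.toReal_one]
  -- Part (a)
  have parta : 1 - (1 - 1 / (m : ℝ) ^ ρ) ^ L ≤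
      (P {ω | ∃ i : Fin L, ∀ j : Fin ℓ,
        h (θ i j ω) (X istar) = h (θ i j ω) q}).toReal := by
    rw [hEventEq]
    have hc : ((⋃ i, B (X istar) i)ᶜ) = ⋂ i ∈ (Finset.univ : Finset (Fin L)), (B (X istar) i)ᶜ := by
      simp [Set.compl_iUnion]
    have hPineq : (P (⋃ i, B (X istar) i)).toReal =
        1 - ∏ i, (P ((B (X istar) i)ᶜ)).toReal := by
      have h1 : P ((⋃ i, B (X istar) i)ᶜ) = ∏ i, P ((B (X istar) i)ᶜ) := by
        rw [hc, hcompl]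
      have h2 := prob_compl_eq_one_sub (μ := P) (s := ⋃ i, B (X istar) i)
        (MeasurableSet.iUnion fun i => hBmeas (X istar) i)
      have h3 : (P ((⋃ i, B (X istar) i)ᶜ)).toReal =
          1 - (P (⋃ i, B (X istar) i)).toReal := by
        rw [h2, ENNReal.toReal_sub_of_le prob_le_one ENNReal.one_ne_top, ENNReal.toReal_one]
      have h4 : (P ((⋃ i, B (X istar) i)ᶜ)).toReal =
          ∏ i, (P ((B (X istar) i)ᶜ)).toReal := by
        rw [h1, ENNReal.toReal_prod]
      linarith [h3, h4]
    rw [hPineq, ← hkey]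
    have hbnd : ∏ i, (P ((B (X istar) i)ᶜ)).toReal ≤ (1 - p₁ ^ ℓ) ^ L := by
      have : ∀ i : Fin L, (P ((B (X istar) i)ᶜ)).toReal ≤ 1 - p₁ ^ ℓ := by
        intro i
        rw [hcomplReal]
        have : p₁ ^ ℓ ≤ (P (B (X istar) i)).toReal := by
          rw [hBtoReal]
          calc p₁ ^ ℓ = ∏ _j : Fin ℓ, p₁ := by
                simp [Finset.prod_const, Finset.card_univ]
            _ ≤ ∏ j, (P (A (X istar) i j)).toReal :=
                Finset.prod_le_prod (fun _ _ => hp₁pos.le) (fun j _ => hAnear i j)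
        linarith
      calc ∏ i, (P ((B (X istar) i)ᶜ)).toReal ≤ ∏ _i : Fin L, (1 - p₁ ^ ℓ) :=
            Finset.prod_le_prod (fun i _ => ENNReal.toReal_nonneg) (fun i _ => this i)
        _ = (1 - p₁ ^ ℓ) ^ L := by simp [Finset.prod_const, Finset.card_univ]
    linarith
  -- Part (b) setup
  set D : Fin m → Set Ω := fun k => {ω | (1 + ε) * r < δ q (X k) ∧
      ∃ i : Fin L, ∀ j : Fin ℓ, h (θ i j ω) (X k) = h (θ i j ω) q} with hDdef
  have hDmeas : ∀ k, MeasurableSet (D k) := by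
    intro k
    by_cases hk : (1 + ε) * r < δ q (X k)
    · have : D k = {ω | ∃ i : Fin L, ∀ j : Fin ℓ,
          h (θ i j ω) (X k) = h (θ i j ω) q} := by
        ext ω; simp [hDdef, hk]
      rw [this]; exact hEvmeas (X k)
    · have : D k = ∅ := by ext ω; simp [hDdef, hk]
      rw [this]; exact MeasurableSet.empty
  have hNcard : ∀ ω : Ω, ((Nat.card {k : Fin m // (1 + ε) * r < δ q (X k) ∧
      ∃ i : Fin L, ∀ j : Fin ℓ, h (θ i j ω) (X k) = h (θ i j ω) q} : ℕ) : ℝ) =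
      ∑ k : Fin m, Set.indicator (D k) (fun _ => (1:ℝ)) ω := by
    intro ω
    rw [Nat.card_eq_fintype_card, Fintype.card_subtype, Finset.card_filter]
    push_cast
    apply Finset.sum_congr rfl
    intro k _
    by_cases hk : ω ∈ D k
    · rw [Set.indicator_of_mem hk, if_pos]
      exact hk
    · rw [Set.indicator_of_notMem hk, if_neg]
      exact hk
  have hint : ∀ k : Fin m, Integrable (Set.indicator (D k) fun _ => (1:ℝ)) P :=
    fun k => (integrable_const (1:ℝ)).indicator (hDmeas k)
  have hEN : (∫ ω, (Nat.card {k : Fin m // (1 + ε) * r < δ q (X k) ∧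
      ∃ i : Fin L, ∀ j : Fin ℓ, h (θ i j ω) (X k) = h (θ i j ω) q} : ℝ) ∂P) =
      ∑ k : Fin m, (P (D k)).toReal := by
    calc (∫ ω, (Nat.card {k : Fin m // (1 + ε) * r < δ q (X k) ∧
        ∃ i : Fin L, ∀ j : Fin ℓ, h (θ i j ω) (X k) = h (θ i j ω) q} : ℝ) ∂P)
        = ∫ ω, ∑ k : Fin m, Set.indicator (D k) (fun _ => (1:ℝ)) ω ∂P := by
          exact integral_congr_ae (Filter.Eventually.of_forall hNcard)
      _ = ∑ k : Fin m, ∫ ω, Set.indicator (D k) (fun _ => (1:ℝ)) ω ∂P :=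
          integral_finset_sum _ (fun k _ => hint k)
      _ = ∑ k : Fin m, (P (D k)).toReal := by
          refine Finset.sum_congr rfl fun k _ => ?_
          rw [integral_indicator_const (1:ℝ) (hDmeas k)]
          simp
          rfl
  have hDbound : ∀ k : Fin m, (P (D k)).toReal ≤ (L : ℝ) * (1 / m) := by
    intro k
    by_cases hk : (1 + ε) * r < δ q (X k)
    · have hsub : D k ⊆ ⋃ i, B (X k) i := by
        intro ω hω
        have := hω.2
        rw [← hEventEq (X k)] at *
        exact this
      have h1 : P (D k) ≤ ∑ i : Fin L, P (B (X k) i) :=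
        le_trans (measure_mono hsub) (measure_iUnion_fintype_le _ _)
      have hfin : (∑ i : Fin L, P (B (X k) i)) ≠ ⊤ :=
        ENNReal.sum_ne_top.mpr fun i _ => measure_ne_top P _
      have h2 : (P (D k)).toReal ≤ ∑ i : Fin L, (P (B (X k) i)).toReal := by
        have := ENNReal.toReal_mono hfin h1
        rwa [ENNReal.toReal_sum (fun i _ => measure_ne_top P _)] at this
      have h3 : ∀ i : Fin L, (P (B (X k) i)).toReal ≤ p₂ ^ ℓ := by
        intro i
        rw [hBtoReal]
        calc ∏ j, (P (A (X k) i j)).toReal ≤ ∏ _j : Fin ℓ, p₂ :=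
              Finset.prod_le_prod (fun j _ => ENNReal.toReal_nonneg)
                (fun j _ => hAfar k hk i j)
          _ = p₂ ^ ℓ := by simp [Finset.prod_const, Finset.card_univ]
      calc (P (D k)).toReal ≤ ∑ i : Fin L, (P (B (X k) i)).toReal := h2
        _ ≤ ∑ _i : Fin L, p₂ ^ ℓ := Finset.sum_le_sum fun i _ => h3 i
        _ = (L : ℝ) * (1 / m) := by
            rw [Finset.sum_const, Finset.card_univ, hℓ]
            simp [nsmul_eq_mul]
    · have : D k = ∅ := by ext ω; simp [hDdef, hk]
      rw [this]
      simp
      positivity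
  have partb : (∫ ω, (Nat.card {k : Fin m // (1 + ε) * r < δ q (X k) ∧
      ∃ i : Fin L, ∀ j : Fin ℓ, h (θ i j ω) (X k) = h (θ i j ω) q} : ℝ) ∂P) ≤ L := by
    rw [hEN]
    calc ∑ k : Fin m, (P (D k)).toReal ≤ ∑ _k : Fin m, (L : ℝ) * (1 / m) :=
          Finset.sum_le_sum fun k _ => hDbound k
      _ = (m : ℝ) * ((L : ℝ) * (1 / m)) := by
          rw [Finset.sum_const, Finset.card_univ]; simp [nsmul_eq_mul]
      _ = L := by field_simp
  refine ⟨parta, partb, ?_⟩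
  -- Part (c): Markov
  set f : Ω → ℝ := fun ω => (Nat.card {k : Fin m // (1 + ε) * r < δ q (X k) ∧
      ∃ i : Fin L, ∀ j : Fin ℓ, h (θ i j ω) (X k) = h (θ i j ω) q} : ℝ) with hfdef
  have hfeq : f = fun ω => ∑ k : Fin m, Set.indicator (D k) (fun _ => (1:ℝ)) ω :=
    funext hNcard
  have hfmeas : Measurable f := by
    rw [hfeq]
    exact Finset.measurable_sum _ fun k _ =>
      (measurable_const.indicator (hDmeas k))
  have hfint : Integrable f P := by
    rw [hfeq]
    exact integrable_finset_sum _ fun k _ => hint k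
  have hfnonneg : 0 ≤ᵐ[P] f := Filter.Eventually.of_forall fun ω => by
    rw [hfdef]; positivity
  have hmarkov := mul_meas_ge_le_integral_of_nonneg hfnonneg hfint ((4 * L : ℕ) + 1 : ℝ)
  have hEle : (∫ ω, f ω ∂P) ≤ L := partb
  have hPle : (P {ω | ((4 * L : ℕ) + 1 : ℝ) ≤ f ω}).toReal ≤ 1 / 4 := by
    have hpos : (0:ℝ) < (4 * L : ℕ) + 1 := by positivity
    have h1 : ((4 * L : ℕ) + 1 : ℝ) * (P {ω | ((4 * L : ℕ) + 1 : ℝ) ≤ f ω}).toReal ≤ L :=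
      le_trans hmarkov hEle
    have h2 : (0:ℝ) ≤ (P {ω | ((4 * L : ℕ) + 1 : ℝ) ≤ f ω}).toReal := ENNReal.toReal_nonneg
    have hx : (P {ω | ((4 * L : ℕ) + 1 : ℝ) ≤ f ω}).toReal ≤ (L:ℝ) / ((4 * L : ℕ) + 1 : ℝ) := by
      rw [le_div_iff₀ hpos]; linarith [h1]
    have hy : (L:ℝ) / ((4 * L : ℕ) + 1 : ℝ) ≤ 1 / 4 := by
      rw [div_le_div_iff₀ hpos (by norm_num)]
      push_cast
      linarith [Nat.cast_nonneg (α := ℝ) L]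
    linarith
  have hsetc : {ω | f ω ≤ 4 * (L:ℝ)}ᶜ = {ω | ((4 * L : ℕ) + 1 : ℝ) ≤ f ω} := by
    have hcast : ∀ n : ℕ, (4 * (L:ℝ) < (n:ℝ)) ↔ (((4 * L : ℕ) + 1 : ℝ) ≤ (n:ℝ)) := by
      intro n
      constructor
      · intro h'
        have h4 : 4 * L < n := by exact_mod_cast h'
        exact_mod_cast Nat.succ_le_of_lt h4
      · intro h'
        have h4 : 4 * L + 1 ≤ n := by exact_mod_cast h'
        exact_mod_cast Nat.lt_of_succ_le h4
    ext ω
    simp only [Set.mem_compl_iff, Set.mem_setOf_eq, not_le]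
    exact hcast _
  have hsetmeas : MeasurableSet {ω | f ω ≤ 4 * (L:ℝ)} :=
    hfmeas measurableSet_Iic
  have hfinal : (P {ω | f ω ≤ 4 * (L:ℝ)}).toReal =
      1 - (P {ω | ((4 * L : ℕ) + 1 : ℝ) ≤ f ω}).toReal := by
    rw [← hsetc, prob_compl_eq_one_sub hsetmeas,
      ENNReal.toReal_sub_of_le prob_le_one ENNReal.one_ne_top, ENNReal.toReal_one]
    ring
  have : (3:ℝ)/4 ≤ (P {ω | f ω ≤ 4 * (L:ℝ)}).toReal := by
    rw [hfinal]; linarith [hPle]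
  exact this
end

section
/- Let G be the Delaunay graph of a finite set X ⊂ R^d in general position (Euclidean metric), and let B be a closed ball centered at μ that contains two points u, v ∈ X. Then either (u,v) is an edge of the Delaunay graph, or some third point of X lies in B. -/
lemma aux13 (d : ℕ) (X : Finset (EuclideanSpace ℝ (Fin d)))
    (u v μ : EuclideanSpace ℝ (Fin d)) (hu : u ∈ X) (hv : v ∈ X) (huv : u ≠ v)
    (hle : dist μ u ≤ dist μ v)
    (hfar : ∀ p ∈ X, p ≠ u → p ≠ v → dist μ v < dist μ p) :
    ({x : EuclideanSpace ℝ (Fin d) | ∀ w ∈ X, dist x u ≤ dist x w} ∩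
      {x : EuclideanSpace ℝ (Fin d) | ∀ w ∈ X, dist x v ≤ dist x w}).Nonempty := by
  set r := dist μ v with hrdef
  set f : ℝ → ℝ := fun t => dist (AffineMap.lineMap μ v t) u - dist (AffineMap.lineMap μ v t) v with hf
  have hcont : ContinuousOn f (Set.Icc (0:ℝ) 1) := by
    apply Continuous.continuousOn
    apply Continuous.sub
    · exact (Continuous.dist AffineMap.lineMap_continuous continuous_const)
    · exact (Continuous.dist AffineMap.lineMap_continuous continuous_const)
  have h0 : f 0 ≤ 0 := by
    simp only [hf, AffineMap.lineMap_apply_zero]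
    linarith [hle, hrdef]
  have h1 : (0:ℝ) ≤ f 1 := by
    simp only [hf, AffineMap.lineMap_apply_one, dist_self]
    have := dist_nonneg (x := v) (y := u); linarith
  have : (0:ℝ) ∈ Set.Icc (f 0) (f 1) := ⟨h0, h1⟩
  obtain ⟨t, ht, hft⟩ := intermediate_value_Icc (by norm_num : (0:ℝ) ≤ 1) hcont this
  set w := AffineMap.lineMap μ v t with hw
  have huw : dist w u = dist w v := by
    have := sub_eq_zero.mp hft
    simpa [hf, hw] using this
  have hwμ : dist w μ = t * r := by
    rw [hw, dist_lineMap_left, Real.norm_eq_abs, abs_of_nonneg ht.1, hrdef]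
  have hwv : dist w v = (1 - t) * r := by
    rw [hw, dist_lineMap_right, Real.norm_eq_abs, abs_of_nonneg (by linarith [ht.2]), hrdef]
  have key : ∀ p ∈ X, dist w v ≤ dist w p := by
    intro p hp
    by_cases hpu : p = u
    · rw [hpu, ← huw]
    by_cases hpv : p = v
    · rw [hpv]
    have hfp := hfar p hp hpu hpv
    have htri : dist μ p ≤ dist μ w + dist w p := dist_triangle _ _ _
    rw [dist_comm μ w] at htri
    rw [hwv]
    nlinarith [hwμ]
  exact ⟨w, fun p hp => huw ▸ key p hp, key⟩


/-- Empty-ball property of the Delaunay graph: for a finite point set `X ⊂ ℝ^d`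
in general position, if a closed ball centered at `μ` contains two points
`u, v ∈ X` (its radius being the larger of their distances to `μ`), then either
the Voronoi regions of `u` and `v` intersect (i.e. `(u,v)` is a Delaunay edge),
or a third point of `X` lies in the ball. -/
theorem stmt13
    (d : ℕ) (X : Finset (EuclideanSpace ℝ (Fin d)))
    -- general position, part 1: no k points (2 ≤ k ≤ d+1) lie on a (k-2)-flat
    (hGP₁ : ∀ S : Finset (EuclideanSpace ℝ (Fin d)), S ⊆ X →
        2 ≤ S.card → S.card ≤ d + 1 →
        ∀ A : AffineSubspace ℝ (EuclideanSpace ℝ (Fin d)),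
          Module.finrank ℝ A.direction = S.card - 2 →
          ¬ (↑S : Set (EuclideanSpace ℝ (Fin d))) ⊆ (A : Set (EuclideanSpace ℝ (Fin d))))
    -- general position, part 2: no k+1 points lie on a (k-2)-dimensional sphere
    (hGP₂ : ∀ S : Finset (EuclideanSpace ℝ (Fin d)), S ⊆ X →
        3 ≤ S.card → S.card ≤ d + 2 →
        ∀ (A : AffineSubspace ℝ (EuclideanSpace ℝ (Fin d)))
          (c : EuclideanSpace ℝ (Fin d)) (ρ : ℝ),
          Module.finrank ℝ A.direction = S.card - 2 →
          ¬ (↑S : Set (EuclideanSpace ℝ (Fin d))) ⊆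
              ((A : Set (EuclideanSpace ℝ (Fin d))) ∩ Metric.sphere c ρ))
    (u v μ : EuclideanSpace ℝ (Fin d)) (hu : u ∈ X) (hv : v ∈ X) (huv : u ≠ v)
    (r : ℝ) (hr : r = max (dist μ u) (dist μ v)) :
    ({x : EuclideanSpace ℝ (Fin d) | ∀ w ∈ X, dist x u ≤ dist x w} ∩
      {x : EuclideanSpace ℝ (Fin d) | ∀ w ∈ X, dist x v ≤ dist x w}).Nonempty ∨
    ∃ w ∈ X, w ≠ u ∧ w ≠ v ∧ dist μ w ≤ r := by
  by_cases h : ∃ w ∈ X, w ≠ u ∧ w ≠ v ∧ dist μ w ≤ r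
  · exact Or.inr h
  left
  push_neg at h
  rcases le_total (dist μ u) (dist μ v) with hle | hle
  · have hrv : r = dist μ v := by rw [hr, max_eq_right hle]
    exact aux13 d X u v μ hu hv huv hle
      (fun p hp hpu hpv => hrv ▸ h p hp hpu hpv)
  · have hrv : r = dist μ u := by rw [hr, max_eq_left hle]
    obtain ⟨x, h1, h2⟩ := aux13 d X v u μ hv hu huv.symm hle
      (fun p hp hpv hpu => hrv ▸ h p hp hpu hpv)
    exact ⟨x, h2, h1⟩
end

section
/- Let G = (V, E) be any graph on a finite point set X ⊂ R^d (Euclidean metric, points in general position) that contains the Delaunay graph of X as a subgraph. Then greedy best-first search for a query q — starting at any node and repeatedly moving to the neighbor closest to q until no neighbor is closer — terminates at the exact nearest neighbor of q in X. -/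
/-!
If `u` were not a nearest neighbour of `q`, walk along the segment from `u` to `q`: it starts in
the Voronoi cell of `u` and ends outside it, so by connectedness it meets the cell of some other
site `w` while still in the cell of `u`, at a point `x ≠ q`. Then `uw` is a Delaunay edge, and
`‖q - w‖ ≤ ‖q - x‖ + ‖x - w‖ = ‖q - x‖ + ‖x - u‖ = ‖q - u‖ ≤ ‖q - w‖` by local optimality. Equality
in the triangle inequality of a strictly convex space puts `u` and `w` on the same ray from `x`,
at the same distance, so `w = u`.
-/

section Voronoi

variable {α : Type*} [MetricSpace α]

def voronoiCell (X : Finset α) (u : α) : Set α := {x | ∀ w ∈ X, dist x u ≤ dist x w}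

theorem exists_mem_voronoiCell_inter_of_isPreconnected {X : Finset α} {u y v : α} {C : Set α}
    (hC : IsPreconnected C) (huC : u ∈ C) (hyC : y ∈ C) (hv : v ∈ X)
    (hyv : dist y v < dist y u) :
    ∃ x ∈ C, ∃ w ∈ X, w ≠ u ∧ x ∈ voronoiCell X u ∩ voronoiCell X w := by
  classical
  by_contra! hnone
  set U : Set α := ⋂ w ∈ X.erase u, {x | dist x u < dist x w}
  set V : Set α := ⋃ w ∈ X, {x | dist x w < dist x u}
  have hUopen : IsOpen U := isOpen_biInter_finset fun w _ =>
    isOpen_lt (continuous_id.dist continuous_const) (continuous_id.dist continuous_const)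
  have hVopen : IsOpen V := isOpen_biUnion fun w _ =>
    isOpen_lt (continuous_id.dist continuous_const) (continuous_id.dist continuous_const)
  have hcover : C ⊆ U ∪ V := by
    intro x hxC
    by_cases hxV : x ∈ V
    · exact Or.inr hxV
    have hxu : x ∈ voronoiCell X u := fun w hw => not_lt.mp fun hlt =>
      hxV (Set.mem_iUnion₂.mpr ⟨w, hw, hlt⟩)
    refine Or.inl (Set.mem_iInter₂.mpr fun w hw => ?_)
    obtain ⟨hwu, hwX⟩ := Finset.mem_erase.mp hw
    show dist x u < dist x w
    by_contra! hle
    exact hnone x hxC w hwX hwu ⟨hxu, fun w' hw' => hle.trans (hxu w' hw')⟩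
  have hdisjoint : ∀ x ∈ U, x ∉ V := by
    intro x hxU hxV
    obtain ⟨w, hw, hlt⟩ := Set.mem_iUnion₂.mp hxV
    have hlt : dist x w < dist x u := hlt
    have hwu : w ≠ u := by rintro rfl; exact lt_irrefl _ hlt
    exact (Set.mem_iInter₂.mp hxU w (Finset.mem_erase.mpr ⟨hwu, hw⟩)).not_gt hlt
  have huU : u ∈ U := Set.mem_iInter₂.mpr fun w hw => by
    simpa [dist_pos] using (Finset.ne_of_mem_erase hw).symm
  have hyV : y ∈ V := Set.mem_iUnion₂.mpr ⟨v, hv, hyv⟩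
  obtain ⟨x, -, hxU, hxV⟩ := hC U V hUopen hVopen hcover ⟨u, huC, huU⟩ ⟨y, hyC, hyV⟩
  exact hdisjoint x hxU hxV

end Voronoi

theorem eq_of_dist_add_dist_eq_of_dist_eq {E : Type*} [NormedAddCommGroup E] [NormedSpace ℝ E]
    [StrictConvexSpace ℝ E] {q x u w : E} (hxq : x ≠ q)
    (hu : dist q x + dist x u = dist q u) (hw : dist q x + dist x w = dist q w)
    (h : dist x u = dist x w) : u = w := by
  have hray : ∀ {z : E}, dist q x + dist x z = dist q z → SameRay ℝ (x - z) (q - x) := by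
    intro z hz
    refine (sameRay_iff_norm_add.mpr ?_).symm
    simpa [dist_eq_norm, sub_add_sub_cancel] using hz.symm
  have huw : SameRay ℝ (x - u) (x - w) :=
    (hray hu).trans (hray hw).symm fun h0 => absurd (sub_eq_zero.mp h0).symm hxq
  simpa using huw.eq_of_norm_eq (by simpa [dist_eq_norm] using h)

theorem stmt14_general
    (d : ℕ) (X : Finset (EuclideanSpace ℝ (Fin d)))
    (Adj : EuclideanSpace ℝ (Fin d) → EuclideanSpace ℝ (Fin d) → Prop)
    -- G contains the Delaunay graph: every Delaunay edge is an edge of G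
    (hDel : ∀ u ∈ X, ∀ v ∈ X, u ≠ v →
        ({x : EuclideanSpace ℝ (Fin d) | ∀ w ∈ X, dist x u ≤ dist x w} ∩
          {x : EuclideanSpace ℝ (Fin d) | ∀ w ∈ X, dist x v ≤ dist x w}).Nonempty →
        Adj u v)
    (q : EuclideanSpace ℝ (Fin d))
    (u : EuclideanSpace ℝ (Fin d)) (hu : u ∈ X)
    -- u is a terminal node of greedy best-first search: no neighbor is closer to q
    (hlocal : ∀ v ∈ X, Adj u v → dist q u ≤ dist q v) :
    ∀ v ∈ X, dist q u ≤ dist q v := by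
  intro v hv
  by_contra! hvu
  obtain ⟨x, hxseg, w, hw, hwu, hxu, hxw⟩ :=
    exists_mem_voronoiCell_inter_of_isPreconnected (convex_segment u q).isPreconnected
      (left_mem_segment ℝ u q) (right_mem_segment ℝ u q) hv hvu
  have hxq : x ≠ q := by
    rintro rfl
    exact (hxu v hv).not_gt hvu
  have hxuw : dist x u = dist x w := le_antisymm (hxu w hw) (hxw u hu)
  have hqw : dist q u ≤ dist q w := hlocal w hw (hDel u hu w hw hwu.symm ⟨x, hxu, hxw⟩)
  have hsegu : dist q x + dist x u = dist q u := by
    have := dist_add_dist_of_mem_segment hxseg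
    rw [dist_comm u x, dist_comm x q, dist_comm u q] at this
    linarith
  have hsegw : dist q x + dist x w = dist q w :=
    le_antisymm (by linarith) (dist_triangle q x w)
  exact hwu (eq_of_dist_add_dist_eq_of_dist_eq hxq hsegu hsegw hxuw).symm

/-- Greedy best-first search on any graph containing the Delaunay graph of a
finite point set in general position terminates at the exact nearest neighbor:
any node `u ∈ X` at which greedy search stops (no neighbor of `u` is closer to
the query `q` than `u`) is a nearest neighbor of `q` in `X`. -/
theorem stmt14
    (d : ℕ) (X : Finset (EuclideanSpace ℝ (Fin d)))
    -- general position, part 1: no k points (2 ≤ k ≤ d+1) lie on a (k-2)-flat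
    (hGP₁ : ∀ S : Finset (EuclideanSpace ℝ (Fin d)), S ⊆ X →
        2 ≤ S.card → S.card ≤ d + 1 →
        ∀ A : AffineSubspace ℝ (EuclideanSpace ℝ (Fin d)),
          Module.finrank ℝ A.direction = S.card - 2 →
          ¬ (↑S : Set (EuclideanSpace ℝ (Fin d))) ⊆ (A : Set (EuclideanSpace ℝ (Fin d))))
    -- general position, part 2: no k+1 points lie on a (k-2)-dimensional sphere
    (hGP₂ : ∀ S : Finset (EuclideanSpace ℝ (Fin d)), S ⊆ X →
        3 ≤ S.card → S.card ≤ d + 2 →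
        ∀ (A : AffineSubspace ℝ (EuclideanSpace ℝ (Fin d)))
          (c : EuclideanSpace ℝ (Fin d)) (ρ : ℝ),
          Module.finrank ℝ A.direction = S.card - 2 →
          ¬ (↑S : Set (EuclideanSpace ℝ (Fin d))) ⊆
              ((A : Set (EuclideanSpace ℝ (Fin d))) ∩ Metric.sphere c ρ))
    (Adj : EuclideanSpace ℝ (Fin d) → EuclideanSpace ℝ (Fin d) → Prop)
    -- G contains the Delaunay graph: every Delaunay edge is an edge of G
    (hDel : ∀ u ∈ X, ∀ v ∈ X, u ≠ v →
        ({x : EuclideanSpace ℝ (Fin d) | ∀ w ∈ X, dist x u ≤ dist x w} ∩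
          {x : EuclideanSpace ℝ (Fin d) | ∀ w ∈ X, dist x v ≤ dist x w}).Nonempty →
        Adj u v)
    (q : EuclideanSpace ℝ (Fin d))
    (u : EuclideanSpace ℝ (Fin d)) (hu : u ∈ X)
    -- u is a terminal node of greedy best-first search: no neighbor is closer to q
    (hlocal : ∀ v ∈ X, Adj u v → dist q u ≤ dist q v) :
    ∀ v ∈ X, dist q u ≤ dist q v :=
  stmt14_general d X Adj hDel q u hu hlocal
end
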